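/- There is no Borel measurable map Φ : 𝕋² → ℙ(ℝ²), defined Lebesgue-almost everywhere, that is invariant under both the horizontal shear family and the vertical shear family in the following sense: D(g₃ᵃ)·Φ(p) = Φ(g₃ᵃ(p)) and D(g₄ᵇ)·Φ(p) = Φ(g₄ᵇ(p)) for Lebesgue-a.e. p ∈ 𝕋², where a, b > 0, φ : S¹ → [0,1] is smooth with φ'(t) > 0 on (0, 1/2) and φ'(t) < 0 on (1/2, 1), g₃ᵃ(x,y) = (x + a·φ(y), y) and g₄ᵇ(x,y) = (x, y + b·φ(x)). -/

import Mathlib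

open MeasureTheory Function

/-- The horizontal shear matrix `[[1, c],[0,1]]` as a linear map `v ↦ (v₁ + c·v₂, v₂)`. -/
noncomputable def shearX (c : ℝ) : (ℝ × ℝ) →ₗ[ℝ] (ℝ × ℝ) where
  toFun v := (v.1 + c * v.2, v.2)
  map_add' v w := by simp [Prod.ext_iff]; ring
  map_smul' r v := by simp [Prod.ext_iff]; ring

/-- The vertical shear matrix `[[1, 0],[c,1]]` as a linear map `v ↦ (v₁, v₂ + c·v₁)`. -/
noncomputable def shearY (c : ℝ) : (ℝ × ℝ) →ₗ[ℝ] (ℝ × ℝ) where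
  toFun v := (v.1, v.2 + c * v.1)
  map_add' v w := by simp [Prod.ext_iff]; ring
  map_smul' r v := by simp [Prod.ext_iff]; ring

theorem shearX_inj (c : ℝ) : Function.Injective (shearX c) := by
  intro v w h
  simp only [shearX, LinearMap.coe_mk, AddHom.coe_mk, Prod.ext_iff] at h ⊢
  obtain ⟨h1, h2⟩ := h
  rw [h2] at h1
  exact ⟨by linarith, h2⟩

theorem shearY_inj (c : ℝ) : Function.Injective (shearY c) := by
  intro v w h
  simp only [shearY, LinearMap.coe_mk, AddHom.coe_mk, Prod.ext_iff] at h ⊢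
  obtain ⟨h1, h2⟩ := h
  rw [h1] at h2
  exact ⟨h1, by linarith⟩

/-- The projective line `ℙ(ℝ²)` with the quotient topology and its Borel σ-algebra. -/
noncomputable instance : TopologicalSpace (Projectivization ℝ (ℝ × ℝ)) :=
  inferInstanceAs (TopologicalSpace (Quotient (projectivizationSetoid ℝ (ℝ × ℝ))))

noncomputable instance : MeasurableSpace (Projectivization ℝ (ℝ × ℝ)) := borel _

section Aux
open Set

noncomputable abbrev Pln := Projectivization ℝ (ℝ × ℝ)

instance : BorelSpace (Projectivization ℝ (ℝ × ℝ)) := ⟨rfl⟩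

/-- first coordinate basis line -/
noncomputable def e1 : Pln := Projectivization.mk ℝ ((1:ℝ), (0:ℝ)) (by simp [Prod.ext_iff])

lemma mk_eq_e1 (v : ℝ × ℝ) (hv : v ≠ 0) : Projectivization.mk ℝ v hv = e1 ↔ v.2 = 0 := by
  rw [e1, Projectivization.mk_eq_mk_iff']
  constructor
  · rintro ⟨a, ha⟩
    rw [← ha]; simp
  · intro h
    exact ⟨v.1, by ext <;> simp [h]⟩

/-- coordinate chart: slope v.1/v.2, with junk value 0 at e1 -/
noncomputable def gX : Pln → ℝ :=
  Projectivization.lift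
    (fun v => if v.val.2 = 0 then 0 else v.val.1 / v.val.2)
    (by
      rintro ⟨v, hv⟩ ⟨w, hw⟩ t h
      simp only [Subtype.mk.injEq] at h
      subst h
      have ht : t ≠ 0 := by rintro rfl; simp at hv
      by_cases h2 : w.2 = 0 <;> simp [Prod.smul_def, smul_eq_mul, h2, ht]
      field_simp)

lemma gX_mk (v : ℝ × ℝ) (hv : v ≠ 0) :
    gX (Projectivization.mk ℝ v hv) = if v.2 = 0 then 0 else v.1 / v.2 := rfl

lemma isOpen_pln_iff (S : Set Pln) :
    IsOpen S ↔ IsOpen {v : {v : ℝ × ℝ // v ≠ 0} | Projectivization.mk ℝ v.val v.prop ∈ S} :=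
  Iff.rfl

lemma isClosed_pln_iff (S : Set Pln) :
    IsClosed S ↔ IsClosed {v : {v : ℝ × ℝ // v ≠ 0} | Projectivization.mk ℝ v.val v.prop ∈ S} := by
  rw [← isOpen_compl_iff, ← isOpen_compl_iff, isOpen_pln_iff]
  rfl

lemma isClosed_e1 : IsClosed ({e1} : Set Pln) := by
  rw [isClosed_pln_iff]
  have : {v : {v : ℝ × ℝ // v ≠ 0} | Projectivization.mk ℝ v.val v.prop ∈ ({e1} : Set Pln)}
      = {v : {v : ℝ × ℝ // v ≠ 0} | v.val.2 = 0} := by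
    ext v; simp [mk_eq_e1]
  rw [this]
  exact isClosed_eq (by fun_prop) continuous_const

lemma measurableSet_e1 : MeasurableSet ({e1} : Set Pln) := isClosed_e1.measurableSet

lemma measurable_gX : Measurable gX := by
  apply measurable_of_isOpen
  intro U hU
  have hdecomp : gX ⁻¹' U = (gX ⁻¹' U ∩ {e1}ᶜ) ∪ (gX ⁻¹' U ∩ {e1}) := by
    rw [← Set.inter_union_distrib_left, Set.compl_union_self, Set.inter_univ]
  rw [hdecomp]
  apply MeasurableSet.union
  · have hopen : IsOpen (gX ⁻¹' U ∩ {e1}ᶜ) := by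
      rw [isOpen_pln_iff]
      have h1 : {v : {v : ℝ × ℝ // v ≠ 0} | Projectivization.mk ℝ v.val v.prop ∈ gX ⁻¹' U ∩ {e1}ᶜ}
          = {v : {v : ℝ × ℝ // v ≠ 0} | v.val.2 ≠ 0}
            ∩ (fun v : {v : ℝ × ℝ // v ≠ 0} => v.val.1 / v.val.2) ⁻¹' U := by
        ext ⟨v, hv⟩
        simp only [Set.mem_inter_iff, Set.mem_setOf_eq, Set.mem_preimage, Set.mem_compl_iff,
          Set.mem_singleton_iff, mk_eq_e1, gX_mk]
        constructor
        · rintro ⟨h1, h2⟩; exact ⟨h2, by simpa [h2] using h1⟩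
        · rintro ⟨h1, h2⟩; exact ⟨by simpa [h1] using h2, h1⟩
      rw [h1]
      apply ContinuousOn.isOpen_inter_preimage ?_ ?_ hU
      · apply ContinuousOn.div (by fun_prop) (by fun_prop)
        intro v hv; exact hv
      · exact isOpen_ne.preimage (by fun_prop)
    exact hopen.measurableSet
  · have hgXe1 : gX e1 = 0 := by simp [e1, gX_mk]
    by_cases h : (0:ℝ) ∈ U
    · have : gX ⁻¹' U ∩ {e1} = {e1} := Set.inter_eq_right.mpr (by
        intro q hq; rw [Set.mem_singleton_iff] at hq; subst hq
        show gX e1 ∈ U; rwa [hgXe1])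
      rw [this]; exact measurableSet_e1
    · have : gX ⁻¹' U ∩ {e1} = ∅ := by
        ext q; simp only [Set.mem_inter_iff, Set.mem_preimage, Set.mem_singleton_iff,
          Set.mem_empty_iff_false, iff_false, not_and]
        rintro hq rfl; rw [hgXe1] at hq; exact h hq
      rw [this]; exact MeasurableSet.empty

noncomputable def e2 : Pln := Projectivization.mk ℝ ((0:ℝ), (1:ℝ)) (by simp [Prod.ext_iff])

lemma mk_eq_e2 (v : ℝ × ℝ) (hv : v ≠ 0) : Projectivization.mk ℝ v hv = e2 ↔ v.1 = 0 := by
  rw [e2, Projectivization.mk_eq_mk_iff']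
  constructor
  · rintro ⟨a, ha⟩
    rw [← ha]; simp
  · intro h
    exact ⟨v.2, by ext <;> simp [h]⟩

lemma e1_ne_e2 : e1 ≠ e2 := by
  rw [Ne, e1, mk_eq_e2]
  norm_num

noncomputable def gY : Pln → ℝ :=
  Projectivization.lift
    (fun v => if v.val.1 = 0 then 0 else v.val.2 / v.val.1)
    (by
      rintro ⟨v, hv⟩ ⟨w, hw⟩ t h
      simp only [Subtype.mk.injEq] at h
      subst h
      have ht : t ≠ 0 := by rintro rfl; simp at hv
      by_cases h2 : w.1 = 0 <;> simp [Prod.smul_def, smul_eq_mul, h2, ht]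
      field_simp)

lemma gY_mk (v : ℝ × ℝ) (hv : v ≠ 0) :
    gY (Projectivization.mk ℝ v hv) = if v.1 = 0 then 0 else v.2 / v.1 := rfl

lemma isClosed_e2 : IsClosed ({e2} : Set Pln) := by
  rw [isClosed_pln_iff]
  have : {v : {v : ℝ × ℝ // v ≠ 0} | Projectivization.mk ℝ v.val v.prop ∈ ({e2} : Set Pln)}
      = {v : {v : ℝ × ℝ // v ≠ 0} | v.val.1 = 0} := by
    ext v; simp [mk_eq_e2]
  rw [this]
  exact isClosed_eq (by fun_prop) continuous_const

lemma measurableSet_e2 : MeasurableSet ({e2} : Set Pln) := isClosed_e2.measurableSet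

lemma measurable_gY : Measurable gY := by
  apply measurable_of_isOpen
  intro U hU
  have hdecomp : gY ⁻¹' U = (gY ⁻¹' U ∩ {e2}ᶜ) ∪ (gY ⁻¹' U ∩ {e2}) := by
    rw [← Set.inter_union_distrib_left, Set.compl_union_self, Set.inter_univ]
  rw [hdecomp]
  apply MeasurableSet.union
  · have hopen : IsOpen (gY ⁻¹' U ∩ {e2}ᶜ) := by
      rw [isOpen_pln_iff]
      have h1 : {v : {v : ℝ × ℝ // v ≠ 0} | Projectivization.mk ℝ v.val v.prop ∈ gY ⁻¹' U ∩ {e2}ᶜ}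
          = {v : {v : ℝ × ℝ // v ≠ 0} | v.val.1 ≠ 0}
            ∩ (fun v : {v : ℝ × ℝ // v ≠ 0} => v.val.2 / v.val.1) ⁻¹' U := by
        ext ⟨v, hv⟩
        simp only [Set.mem_inter_iff, Set.mem_setOf_eq, Set.mem_preimage, Set.mem_compl_iff,
          Set.mem_singleton_iff, mk_eq_e2, gY_mk]
        constructor
        · rintro ⟨h1, h2⟩; exact ⟨h2, by simpa [h2] using h1⟩
        · rintro ⟨h1, h2⟩; exact ⟨by simpa [h1] using h2, h1⟩
      rw [h1]
      apply ContinuousOn.isOpen_inter_preimage ?_ ?_ hU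
      · apply ContinuousOn.div (by fun_prop) (by fun_prop)
        intro v hv; exact hv
      · exact isOpen_ne.preimage (by fun_prop)
    exact hopen.measurableSet
  · have hgYe2 : gY e2 = 0 := by simp [e2, gY_mk]
    by_cases h : (0:ℝ) ∈ U
    · have : gY ⁻¹' U ∩ {e2} = {e2} := Set.inter_eq_right.mpr (by
        intro q hq; rw [Set.mem_singleton_iff] at hq; subst hq
        show gY e2 ∈ U; rwa [hgYe2])
      rw [this]; exact measurableSet_e2
    · have : gY ⁻¹' U ∩ {e2} = ∅ := by
        ext q; simp only [Set.mem_inter_iff, Set.mem_preimage, Set.mem_singleton_iff,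
          Set.mem_empty_iff_false, iff_false, not_and]
        rintro hq rfl; rw [hgYe2] at hq; exact h hq
      rw [this]; exact MeasurableSet.empty

lemma shearX_apply (t : ℝ) (v : ℝ × ℝ) : shearX t v = (v.1 + t * v.2, v.2) := rfl

lemma shearY_apply (t : ℝ) (v : ℝ × ℝ) : shearY t v = (v.1, v.2 + t * v.1) := rfl

lemma map_shearX_eq_e1_iff (t : ℝ) (q : Pln) :
    Projectivization.map (shearX t) (shearX_inj t) q = e1 ↔ q = e1 := by
  induction q using Projectivization.ind with
  | h v hv =>
    rw [Projectivization.map_mk, mk_eq_e1, mk_eq_e1, shearX_apply]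

lemma gX_map_shearX (t : ℝ) (q : Pln) (hq : q ≠ e1) :
    gX (Projectivization.map (shearX t) (shearX_inj t) q) = gX q + t := by
  induction q using Projectivization.ind with
  | h v hv =>
    rw [Ne, mk_eq_e1] at hq
    rw [Projectivization.map_mk, gX_mk, gX_mk, shearX_apply, if_neg hq, if_neg hq]
    field_simp

lemma map_shearY_eq_e2_iff (t : ℝ) (q : Pln) :
    Projectivization.map (shearY t) (shearY_inj t) q = e2 ↔ q = e2 := by
  induction q using Projectivization.ind with
  | h v hv =>
    rw [Projectivization.map_mk, mk_eq_e2, mk_eq_e2, shearY_apply]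

lemma gY_map_shearY (t : ℝ) (q : Pln) (hq : q ≠ e2) :
    gY (Projectivization.map (shearY t) (shearY_inj t) q) = gY q + t := by
  induction q using Projectivization.ind with
  | h v hv =>
    rw [Ne, mk_eq_e2] at hq
    rw [Projectivization.map_mk, gY_mk, gY_mk, shearY_apply, if_neg hq, if_neg hq]
    field_simp

/-- A finite measure on ℝ invariant under a positive translation is zero. -/
lemma eq_zero_of_translation_invariant_pos {ν : Measure ℝ} [IsFiniteMeasure ν] {t : ℝ}
    (ht : 0 < t) (hinv : Measure.map (· + t) ν = ν) : ν = 0 := by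
  have hstep : ∀ r : ℝ, ν (Set.Ico (r + t) (r + t + t)) = ν (Set.Ico r (r + t)) := by
    intro r
    conv_lhs => rw [← hinv]
    rw [Measure.map_apply (measurable_add_const t) measurableSet_Ico]
    congr 1
    ext x
    simp only [Set.mem_preimage, Set.mem_Ico]
    constructor <;> rintro ⟨h1, h2⟩ <;> constructor <;> linarith
  have hn : ∀ n : ℤ, ν (Set.Ico ((n : ℝ) * t) ((n : ℝ) * t + t)) = ν (Set.Ico 0 t) := by
    intro n
    induction n using Int.induction_on with
    | zero => norm_num
    | succ k ih =>
      have h := hstep ((k : ℝ) * t)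
      have harith : ((k : ℝ) + 1) * t = (k : ℝ) * t + t := by ring
      push_cast at ih ⊢
      rw [harith, h]
      exact ih
    | pred k ih =>
      have h := hstep ((-(k : ℝ) - 1) * t)
      push_cast at ih ⊢
      rw [← h]
      have h1 : (-(k : ℝ) - 1) * t + t = (-(k : ℝ)) * t := by ring
      rw [h1]
      exact ih
  -- the interval Ico (n t) (n t + t) contains x iff n = ⌊x / t⌋
  have hmem : ∀ (x : ℝ) (n : ℤ), x ∈ Set.Ico ((n : ℝ) * t) ((n : ℝ) * t + t) ↔ n = ⌊x / t⌋ := by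
    intro x n
    rw [Set.mem_Ico]
    constructor
    · rintro ⟨h1, h2⟩
      symm
      rw [Int.floor_eq_iff]
      constructor
      · rw [le_div_iff₀ ht]; linarith
      · rw [div_lt_iff₀ ht]; push_cast; linarith
    · rintro rfl
      have h1 : (⌊x / t⌋ : ℝ) ≤ x / t := Int.floor_le _
      have h2 : x / t < ⌊x / t⌋ + 1 := Int.lt_floor_add_one _
      rw [le_div_iff₀ ht] at h1
      rw [div_lt_iff₀ ht] at h2
      constructor <;> nlinarith
  have hzero : ν (Set.Ico 0 t) = 0 := by
    by_contra hm
    have hdisj : Pairwise (Function.onFun Disjoint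
        fun n : ℕ => Set.Ico (((n : ℤ) : ℝ) * t) (((n : ℤ) : ℝ) * t + t)) := by
      intro m n hmn
      rw [Function.onFun, Set.disjoint_left]
      intro x hx hx'
      rw [hmem] at hx hx'
      exact hmn (by exact_mod_cast hx.trans hx'.symm)
    have hsum := measure_iUnion (μ := ν) hdisj (fun n => measurableSet_Ico)
    have hle : ν (⋃ n : ℕ, Set.Ico (((n : ℤ) : ℝ) * t) (((n : ℤ) : ℝ) * t + t)) ≤ ν Set.univ :=
      measure_mono (Set.subset_univ _)
    rw [hsum] at hle
    have : ∑' _ : ℕ, ν (Set.Ico 0 t) ≤ ν Set.univ := by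
      refine le_trans (le_of_eq ?_) hle
      congr 1
      ext n
      rw [hn]
    rw [ENNReal.tsum_const_eq_top_of_ne_zero hm] at this
    exact (measure_lt_top ν Set.univ).ne (top_le_iff.mp this)
  have hcover : Set.univ ⊆ ⋃ n : ℤ, Set.Ico ((n : ℝ) * t) ((n : ℝ) * t + t) := by
    intro x _
    exact Set.mem_iUnion.mpr ⟨⌊x / t⌋, (hmem x _).mpr rfl⟩
  have : ν Set.univ = 0 := by
    refine le_antisymm ?_ zero_le
    calc ν Set.univ ≤ ν (⋃ n : ℤ, Set.Ico ((n : ℝ) * t) ((n : ℝ) * t + t)) :=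
          measure_mono hcover
      _ ≤ ∑' n : ℤ, ν (Set.Ico ((n : ℝ) * t) ((n : ℝ) * t + t)) := measure_iUnion_le _
      _ = 0 := by simp [hn, hzero]
  exact Measure.measure_univ_eq_zero.mp this

lemma eq_zero_of_translation_invariant {ν : Measure ℝ} [IsFiniteMeasure ν] {t : ℝ}
    (ht : t ≠ 0) (hinv : Measure.map (· + t) ν = ν) : ν = 0 := by
  rcases ht.lt_or_gt with h | h
  · have hinv' : Measure.map (· + (-t)) ν = ν := by
      conv_lhs => rw [← hinv]
      rw [Measure.map_map (measurable_add_const (-t)) (measurable_add_const t)]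
      have : ((· + (-t)) ∘ (· + t)) = id := by ext x; simp
      rw [this, Measure.map_id]
    exact eq_zero_of_translation_invariant_pos (by linarith) hinv'
  · exact eq_zero_of_translation_invariant_pos h hinv

/-- Key dynamical lemma: if a measurable `ψ` into the projective line is equivariant a.e.
under a measure-preserving map on a finite measure space, where the projective action `F`
fixes `e` and translates the chart `g` by `t ≠ 0` off `e`, then `ψ = e` a.e. -/
lemma key_lemma {X : Type*} [MeasurableSpace X] (μ : Measure X) [IsFiniteMeasure μ]
    {R : X → X} (hR : MeasurePreserving R μ μ)
    {ψ : X → Pln} (hψ : Measurable ψ) {e : Pln} (he : MeasurableSet ({e} : Set Pln))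
    {g : Pln → ℝ} (hg : Measurable g) {F : Pln → Pln} {t : ℝ} (ht : t ≠ 0)
    (hFe : ∀ q, F q = e ↔ q = e) (hFg : ∀ q, q ≠ e → g (F q) = g q + t)
    (hae : ∀ᵐ x ∂μ, ψ (R x) = F (ψ x)) : ∀ᵐ x ∂μ, ψ x = e := by
  set A : Set X := ψ ⁻¹' {e} with hA
  have hAm : MeasurableSet A := hψ he
  set s : X → ℝ := fun x => g (ψ x) with hsdef
  have hs : Measurable s := hg.comp hψ
  set ν : Measure ℝ := Measure.map s (μ.restrict Aᶜ) with hν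
  have hνuniv : ν Set.univ = μ Aᶜ := by
    rw [hν, Measure.map_apply hs MeasurableSet.univ, Set.preimage_univ,
      Measure.restrict_apply MeasurableSet.univ, Set.univ_inter]
  have hνfin : IsFiniteMeasure ν := by
    constructor
    rw [hνuniv]
    exact (measure_mono (Set.subset_univ _)).trans_lt (measure_lt_top μ _)
  have hinv : Measure.map (· + t) ν = ν := by
    ext B hB
    have hBt : MeasurableSet ((· + t) ⁻¹' B) := hB.preimage (measurable_add_const t)
    rw [Measure.map_apply (measurable_add_const t) hB, hν,
      Measure.map_apply hs hBt, Measure.map_apply hs hB,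
      Measure.restrict_apply (hs hBt), Measure.restrict_apply (hs hB)]
    -- goal : μ (s ⁻¹' ((·+t) ⁻¹' B) ∩ Aᶜ) = μ (s ⁻¹' B ∩ Aᶜ)
    have hpre : μ (R ⁻¹' (s ⁻¹' B ∩ Aᶜ)) = μ (s ⁻¹' B ∩ Aᶜ) :=
      hR.measure_preimage ((hs hB).inter hAm.compl).nullMeasurableSet
    rw [← hpre]
    apply measure_congr
    rw [Filter.eventuallyEq_set]
    filter_upwards [hae] with x hx
    simp only [Set.mem_inter_iff, Set.mem_preimage, Set.mem_compl_iff, hA,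
      Set.mem_singleton_iff]
    constructor
    · rintro ⟨hsx, hxA⟩
      refine ⟨?_, ?_⟩
      · show g (ψ (R x)) ∈ B
        rw [hx, hFg _ hxA]
        exact hsx
      · show ¬ ψ (R x) = e
        rw [hx, hFe]
        exact hxA
    · rintro ⟨hsx, hxA⟩
      rw [show ψ (R x) = F (ψ x) from hx, hFe] at hxA
      refine ⟨?_, hxA⟩
      have hsx' : g (ψ (R x)) ∈ B := hsx
      rw [hx, hFg _ hxA] at hsx'
      exact hsx'
  have hν0 : ν = 0 := eq_zero_of_translation_invariant ht hinv
  have hAc : μ Aᶜ = 0 := by rw [← hνuniv, hν0]; rfl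
  rw [ae_iff]
  have : {x | ¬ ψ x = e} = Aᶜ := by ext x; simp [hA]
  rw [this]
  exact hAc

lemma addCircle_singleton_null (y : AddCircle (1:ℝ)) :
    (volume : Measure (AddCircle (1:ℝ))) {y} = 0 := by
  haveI : Fact ((0:ℝ) < 1) := ⟨one_pos⟩
  have h := AddCircle.volume_closedBall (T := 1) (x := y) 0
  rw [Metric.closedBall_zero] at h
  rw [h]
  norm_num


end Aux

/-- there is no Lebesgue-a.e. defined measurable line field
`Φ : 𝕋² → ℙ(ℝ²)` invariant under both the horizontal shear `g₃ᵃ(x,y) = (x + a·φ(y), y)`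
and the vertical shear `g₄ᵇ(x,y) = (x, y + b·φ(x))`, where `a, b > 0` and
`φ : S¹ → [0,1]` (viewed as a smooth `1`-periodic function on `ℝ`) satisfies
`φ' > 0` on `(0, 1/2)` and `φ' < 0` on `(1/2, 1)`.  The derivative of `g₃ᵃ`
(in the standard coordinates) acts on lines by the shear matrix `[[1, a·φ'(y)],[0,1]]`,
and that of `g₄ᵇ` by `[[1,0],[b·φ'(x),1]]`. -/
theorem no_invariant_line_field
    (φ : ℝ → ℝ) (hsm : ContDiff ℝ (⊤ : ℕ∞) φ) (hper : Function.Periodic φ 1)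
    (hdper : Function.Periodic (deriv φ) 1)
    (hrange : ∀ s, φ s ∈ Set.Icc (0:ℝ) 1)
    (hpos : ∀ s ∈ Set.Ioo (0:ℝ) (1/2), 0 < deriv φ s)
    (hneg : ∀ s ∈ Set.Ioo (1/2:ℝ) 1, deriv φ s < 0)
    (a b : ℝ) (ha : 0 < a) (hb : 0 < b) :
    ¬ ∃ Φ : AddCircle (1:ℝ) × AddCircle (1:ℝ) → Projectivization ℝ (ℝ × ℝ),
        Measurable Φ ∧
        (∀ᵐ p ∂(volume : Measure (AddCircle (1:ℝ) × AddCircle (1:ℝ))),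
          Φ (p.1 + ((a * hper.lift p.2 : ℝ) : AddCircle (1:ℝ)), p.2) =
            Projectivization.map (shearX (a * hdper.lift p.2))
              (shearX_inj (a * hdper.lift p.2)) (Φ p)) ∧
        (∀ᵐ p ∂(volume : Measure (AddCircle (1:ℝ) × AddCircle (1:ℝ))),
          Φ (p.1, p.2 + ((b * hper.lift p.1 : ℝ) : AddCircle (1:ℝ))) =
            Projectivization.map (shearY (b * hdper.lift p.1))
              (shearY_inj (b * hdper.lift p.1)) (Φ p)) := by
  haveI : Fact ((0:ℝ) < 1) := ⟨one_pos⟩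
  rintro ⟨Φ, hΦ, hae1, hae2⟩
  set μ : Measure (AddCircle (1:ℝ)) := volume with hμdef
  have hprod : (volume : Measure (AddCircle (1:ℝ) × AddCircle (1:ℝ))) = μ.prod μ :=
    Measure.volume_eq_prod _ _
  -- a.e. the lifted derivative is nonzero
  have hlift : ∀ᵐ y ∂μ, hdper.lift y ≠ 0 := by
    rw [ae_iff]
    apply measure_mono_null
      (t := {(((1:ℝ)/2 : ℝ) : AddCircle (1:ℝ)), ((1 : ℝ) : AddCircle (1:ℝ))})
    · intro y hy
      simp only [Set.mem_setOf_eq, not_not] at hy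
      obtain ⟨x, hx, hxy⟩ : ∃ x, x ∈ Set.Ioc (0:ℝ) 1 ∧ (x : AddCircle (1:ℝ)) = y := by
        let bb := QuotientAddGroup.equivIocMod (a := (0:ℝ)) one_pos y
        exact ⟨bb.1, by simpa using bb.2,
          (QuotientAddGroup.equivIocMod one_pos 0).symm_apply_apply y⟩
      have hval : hdper.lift y = deriv φ x := by rw [← hxy]; exact hdper.lift_coe x
      have hzero : deriv φ x = 0 := by rw [← hval]; exact hy
      have hcases : x = 1/2 ∨ x = 1 := by
        by_contra hc
        push_neg at hc
        rcases lt_trichotomy x (1/2) with h | h | h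
        · exact absurd hzero (ne_of_gt (hpos x ⟨hx.1, h⟩))
        · exact hc.1 h
        · rcases lt_or_eq_of_le hx.2 with h2 | h2
          · exact absurd hzero (ne_of_lt (hneg x ⟨h, h2⟩))
          · exact hc.2 h2
      rcases hcases with h | h
      · left; rw [← hxy, h]
      · right; rw [← hxy, h]; exact rfl
    · apply measure_union_null <;> exact addCircle_singleton_null _
  -- rotations are measure preserving
  have hrot : ∀ c : AddCircle (1:ℝ), MeasurePreserving (· + c) μ μ := fun c =>
    measurePreserving_add_right μ c
  have hswap : MeasurePreserving Prod.swap (μ.prod μ) (μ.prod μ) :=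
    Measure.measurePreserving_swap
  -- Claim A : Φ = e1 a.e.
  have hA : ∀ᵐ p ∂(volume : Measure (AddCircle (1:ℝ) × AddCircle (1:ℝ))), Φ p = e1 := by
    rw [hprod] at hae1 ⊢
    have hae1' := hswap.quasiMeasurePreserving.ae hae1
    have h2 := Measure.ae_ae_of_ae_prod hae1'
    have h3 : ∀ᵐ y ∂μ, ∀ᵐ x ∂μ, Φ (x, y) = e1 := by
      filter_upwards [h2, hlift] with y hy hy0
      exact key_lemma μ (R := (· + ((a * hper.lift y : ℝ) : AddCircle (1:ℝ))))
        (ψ := fun x => Φ (x, y))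
        (F := Projectivization.map (shearX (a * hdper.lift y)) (shearX_inj (a * hdper.lift y)))
        (hrot _) (hΦ.comp (measurable_id.prodMk measurable_const))
        measurableSet_e1 measurable_gX (t := a * hdper.lift y)
        (mul_ne_zero ha.ne' hy0) (map_shearX_eq_e1_iff _) (gX_map_shearX _) hy
    -- convert slicewise statement to the product
    have hT'm : MeasurableSet {q : AddCircle (1:ℝ) × AddCircle (1:ℝ) | ¬ Φ q.swap = e1} := by
      have : {q : AddCircle (1:ℝ) × AddCircle (1:ℝ) | ¬ Φ q.swap = e1}
          = (fun q : AddCircle (1:ℝ) × AddCircle (1:ℝ) => Φ q.swap) ⁻¹' {e1}ᶜ := rfl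
      rw [this]
      exact (hΦ.comp measurable_swap) measurableSet_e1.compl
    rw [ae_iff]
    have hTT : {p : AddCircle (1:ℝ) × AddCircle (1:ℝ) | ¬ Φ p = e1}
        = Prod.swap ⁻¹' {q : AddCircle (1:ℝ) × AddCircle (1:ℝ) | ¬ Φ q.swap = e1} := by
      ext ⟨x, y⟩; rfl
    rw [hTT, hswap.measure_preimage hT'm.nullMeasurableSet]
    rw [Measure.measure_prod_null hT'm]
    filter_upwards [h3] with y hy
    have : Prod.mk y ⁻¹' {q : AddCircle (1:ℝ) × AddCircle (1:ℝ) | ¬ Φ q.swap = e1}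
        = {x | ¬ Φ (x, y) = e1} := rfl
    rw [this]
    exact ae_iff.mp hy
  -- Claim B : Φ = e2 a.e.
  have hB : ∀ᵐ p ∂(volume : Measure (AddCircle (1:ℝ) × AddCircle (1:ℝ))), Φ p = e2 := by
    rw [hprod] at hae2 ⊢
    have h2 := Measure.ae_ae_of_ae_prod hae2
    have h3 : ∀ᵐ x ∂μ, ∀ᵐ y ∂μ, Φ (x, y) = e2 := by
      filter_upwards [h2, hlift] with x hx hx0
      exact key_lemma μ (R := (· + ((b * hper.lift x : ℝ) : AddCircle (1:ℝ))))
        (ψ := fun y => Φ (x, y))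
        (F := Projectivization.map (shearY (b * hdper.lift x)) (shearY_inj (b * hdper.lift x)))
        (hrot _) (hΦ.comp (measurable_const.prodMk measurable_id))
        measurableSet_e2 measurable_gY (t := b * hdper.lift x)
        (mul_ne_zero hb.ne' hx0) (map_shearY_eq_e2_iff _) (gY_map_shearY _) hx
    have hT'm : MeasurableSet {q : AddCircle (1:ℝ) × AddCircle (1:ℝ) | ¬ Φ q = e2} := by
      have : {q : AddCircle (1:ℝ) × AddCircle (1:ℝ) | ¬ Φ q = e2} = Φ ⁻¹' {e2}ᶜ := rfl
      rw [this]
      exact hΦ measurableSet_e2.compl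
    rw [ae_iff, Measure.measure_prod_null hT'm]
    filter_upwards [h3] with x hx
    have : Prod.mk x ⁻¹' {q : AddCircle (1:ℝ) × AddCircle (1:ℝ) | ¬ Φ q = e2}
        = {y | ¬ Φ (x, y) = e2} := rfl
    rw [this]
    exact ae_iff.mp hx
  -- combine
  have hne : (volume : Measure (AddCircle (1:ℝ) × AddCircle (1:ℝ))) ≠ 0 := by
    rw [hprod]
    intro h0
    have : (μ.prod μ) Set.univ = 0 := by rw [h0]; rfl
    rw [← Set.univ_prod_univ, Measure.prod_prod] at this
    rw [hμdef, AddCircle.measure_univ] at this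
    norm_num at this
  haveI : Filter.NeBot (ae (volume : Measure (AddCircle (1:ℝ) × AddCircle (1:ℝ)))) :=
    ae_neBot.mpr hne
  obtain ⟨p, hp1, hp2⟩ := (hA.and hB).exists
  exact e1_ne_e2 (hp1 ▸ hp2)
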